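/- Let κ ≥ 0, α_x, α_t ∈ (0,1], p ∈ C^{α_x,α_t}([0,T]×Ω̄) with 1 < p⁻ ≤ p⁺ < ∞, and let s > 1 and δ > 0. Then there exist a constant c_{δ,s} > 0 and Δt₀ ∈ (0,1) such that for all 0 < Δt ≤ Δt₀, all σ, t ∈ [0,T] with |t − σ| ≤ Δt, all x ∈ Ω̄, and all ξ, η ∈ ℝ^{N×n}: (S(t,x,ξ) − S(σ,x,ξ)) : (ξ − η) ≤ δ |F(t,x,ξ) − F(t,x,η)|² + c_{δ,s} (Δt)^{2α_t} (1 + |ξ|)^{p(t,x)·s}. -/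

import Mathlib

/-!
Write `a = κ + |ξ|`, `P = p(t,x)`, `Q = p(σ,x)` and `m = max(a, 1/a)`. The left side is
`(a^(P-2) - a^(Q-2)) ξ : (ξ - η)`, and Hölder continuity gives `|Q - P| ≤ c Δt^α_t ≤ ε` for a small
fixed `ε`. Convexity of `θ ↦ a^θ` turns this into `|a^(P-2) - a^(Q-2)| |ξ| ≤ X` with
`X = (|Q - P| / ε) a^(P-1) m^ε`. On the other side,
`|F(ξ) - F(η)|² ≳ (κ + |ξ| + |η|)^(P-2) |ξ - η|²` uniformly for `P ∈ [p⁻, p⁺]`, so Young's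
inequality (with exponent `2`, or with exponent `P` when `P < 2` and `|ξ - η| ≥ 2a`) absorbs
`X |ξ - η|` into `δ |F(ξ) - F(η)|²` up to `(|Q - P| / ε)² a^P m^(O(ε))`. The margin `s > 1` in the
exponent `p(t,x) s` swallows the factor `m^(O(ε))`.
-/

open Set
open scoped RealInnerProductSpace

namespace VariableExponent

open Real

lemma rpow_le_max_inv_rpow_abs {a : ℝ} (ha : 0 < a) (θ : ℝ) : a ^ θ ≤ max a a⁻¹ ^ |θ| := by
  rcases le_total 0 θ with hθ | hθ
  · rw [abs_of_nonneg hθ]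
    exact rpow_le_rpow ha.le (le_max_left _ _) hθ
  · rw [abs_of_nonpos hθ, ← inv_inv (a ^ θ), ← rpow_neg ha.le, ← inv_rpow ha.le]
    exact rpow_le_rpow (inv_nonneg.2 ha.le) (le_max_right _ _) (neg_nonneg.2 hθ)

lemma one_le_max_inv {a : ℝ} (ha : 0 < a) : 1 ≤ max a a⁻¹ := by
  rcases le_total 1 a with h | h
  · exact h.trans (le_max_left _ _)
  · exact (one_le_inv₀ ha).2 h |>.trans (le_max_right _ _)

/-- With `m = max a a⁻¹`, `a ^ θ` lies in `[m ^ (-|θ|), m ^ |θ|]`, and Bernoulli's inequality for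
`m ^ |θ| = (m ^ ε) ^ (|θ| / ε)` gives `m ^ |θ| - 1 ≤ |θ| / ε * (m ^ ε - 1)`. -/
lemma abs_rpow_sub_one_le {a θ ε : ℝ} (ha : 0 < a) (hε : 0 < ε) (hθ : |θ| ≤ ε) :
    |a ^ θ - 1| ≤ |θ| / ε * max a a⁻¹ ^ ε := by
  set m := max a a⁻¹
  have hm : 1 ≤ m := one_le_max_inv ha
  set y := m ^ |θ|
  have hy : 1 ≤ y := one_le_rpow hm (abs_nonneg θ)
  have hupper : a ^ θ ≤ y := rpow_le_max_inv_rpow_abs ha θ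
  have hlower : y⁻¹ ≤ a ^ θ := by
    have := rpow_le_max_inv_rpow_abs ha (-θ)
    rw [abs_neg, rpow_neg ha.le] at this
    exact (inv_le_comm₀ (by positivity) (by positivity)).1 this
  have hθε : 0 ≤ |θ| / ε := div_nonneg (abs_nonneg θ) hε.le
  have hbernoulli : y ≤ 1 + |θ| / ε * (m ^ ε - 1) := by
    have := rpow_one_add_le_one_add_mul_self (s := m ^ ε - 1)
      (by linarith [one_le_rpow hm hε.le]) hθε ((div_le_one hε).2 hθ)
    rwa [add_sub_cancel, ← rpow_mul (by linarith), mul_div_cancel₀ _ hε.ne'] at this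
  have hinv : 1 - y⁻¹ ≤ y - 1 := by
    have hyy : y * y⁻¹ = 1 := mul_inv_cancel₀ (by positivity)
    nlinarith [mul_nonneg (sq_nonneg (y - 1)) (inv_nonneg.2 (zero_le_one.trans hy))]
  rw [abs_le]
  constructor <;> nlinarith

lemma mul_rpow_mul_rpow_rpow {t a m : ℝ} (ht : 0 ≤ t) (ha : 0 ≤ a) (hm : 0 ≤ m) (u v e : ℝ) :
    (t * a ^ u * m ^ v) ^ e = t ^ e * a ^ (u * e) * m ^ (v * e) := by
  rw [mul_rpow (by positivity) (by positivity), mul_rpow ht (by positivity), ← rpow_mul ha,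
    ← rpow_mul hm]

/-- The two remainders left by `mul_le_of_young_absorb` for `X = t a^(P-1) m^ε` are `t² a^P` up to
a power of `m = max a a⁻¹`. -/
lemma sq_mul_rpow_le {t a P ε Λ : ℝ} (ht : 0 ≤ t) (ha : 0 < a) (hεΛ : 2 * ε ≤ Λ) :
    (t * a ^ (P - 1) * max a a⁻¹ ^ ε) ^ 2 * a ^ (2 - P) ≤ t ^ 2 * (a ^ P * max a a⁻¹ ^ Λ) := by
  have hm := one_le_max_inv ha
  rw [← rpow_two, mul_rpow_mul_rpow_rpow ht ha.le (by linarith), rpow_two]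
  calc t ^ 2 * a ^ ((P - 1) * 2) * max a a⁻¹ ^ (ε * 2) * a ^ (2 - P)
      = t ^ 2 * (a ^ ((P - 1) * 2 + (2 - P)) * max a a⁻¹ ^ (ε * 2)) := by
        rw [rpow_add ha]; ring
    _ ≤ t ^ 2 * (a ^ P * max a a⁻¹ ^ Λ) := by
        rw [show (P - 1) * 2 + (2 - P) = P by ring]
        gcongr
        linarith

lemma rpow_conjExponent_le {t a P ε Λ : ℝ} (ht : 0 ≤ t) (ht1 : t ≤ 1) (ha : 0 < a) (hP : 1 < P)
    (hP2 : P ≤ 2) (hεΛ : ε * (P / (P - 1)) ≤ Λ) :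
    (t * a ^ (P - 1) * max a a⁻¹ ^ ε) ^ (P / (P - 1)) ≤ t ^ 2 * (a ^ P * max a a⁻¹ ^ Λ) := by
  have hm := one_le_max_inv ha
  rw [mul_rpow_mul_rpow_rpow ht ha.le (by linarith), mul_div_cancel₀ _ (by linarith), mul_assoc]
  gcongr
  · rw [← rpow_two]
    exact rpow_le_rpow_of_exponent_ge' ht ht1 zero_le_two
      ((le_div_iff₀ (by linarith)).2 (by linarith))

lemma rpow_mul_max_inv_rpow_le {a b c P Λ e E : ℝ} (ha : 0 ≤ a) (hb : 1 ≤ b) (hc : 1 ≤ c)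
    (hab : a ≤ c * b) (hΛ : 0 ≤ Λ) (hΛP : Λ ≤ P) (hPΛe : P + Λ ≤ e) (heE : e ≤ E) :
    a ^ P * max a a⁻¹ ^ Λ ≤ c ^ E * b ^ e := by
  rcases le_total a 1 with ha1 | ha1
  · refine le_trans ?_ (one_le_mul_of_one_le_of_one_le (one_le_rpow hc (by linarith))
      (one_le_rpow hb (by linarith)))
    rcases ha.eq_or_lt with rfl | ha
    · simp only [inv_zero, max_self]
      exact mul_le_one₀ (zero_rpow_le_one P) (zero_rpow_nonneg Λ) (zero_rpow_le_one Λ)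
    rw [max_eq_right (ha1.trans ((one_le_inv₀ ha).2 ha1)), inv_rpow ha.le, ← div_eq_mul_inv,
      ← rpow_sub ha]
    exact rpow_le_one ha.le ha1 (by linarith)
  · have ha : 0 < a := by linarith
    rw [max_eq_left ((inv_le_one_of_one_le₀ ha1).trans ha1), ← rpow_add ha]
    calc a ^ (P + Λ) ≤ a ^ e := rpow_le_rpow_of_exponent_le ha1 hPΛe
      _ ≤ (c * b) ^ e := rpow_le_rpow ha.le hab (by linarith)
      _ = c ^ e * b ^ e := mul_rpow (by linarith) (by linarith)
      _ ≤ c ^ E * b ^ e := by gcongr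

lemma mul_le_young_weighted {x y P c : ℝ} (hx : 0 ≤ x) (hy : 0 ≤ y) (hP : 1 < P) (hc : 0 < c) :
    x * y ≤ c * x ^ P + c⁻¹ ^ (P - 1)⁻¹ * y ^ (P / (P - 1)) := by
  have hpq : P.HolderConjugate (P / (P - 1)) := HolderConjugate.conjExponent hP
  have hq : 1 ≤ P / (P - 1) := (one_le_div (by linarith)).2 (by linarith)
  have hP0 : P ≠ 0 := by positivity
  have hyoung := young_inequality_of_nonneg (mul_nonneg (rpow_nonneg hc.le (1 / P)) hx)
    (mul_nonneg (rpow_nonneg (inv_nonneg.2 hc.le) (1 / P)) hy) hpq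
  have hprod : c ^ (1 / P) * x * (c⁻¹ ^ (1 / P) * y) = x * y := by
    rw [mul_mul_mul_comm, ← mul_rpow hc.le (inv_nonneg.2 hc.le), mul_inv_cancel₀ hc.ne',
      one_rpow, one_mul]
  have hfirst : (c ^ (1 / P) * x) ^ P = c * x ^ P := by
    rw [mul_rpow (rpow_nonneg hc.le _) hx, ← rpow_mul hc.le, one_div_mul_cancel hP0, rpow_one]
  have hsecond : (c⁻¹ ^ (1 / P) * y) ^ (P / (P - 1)) = c⁻¹ ^ (P - 1)⁻¹ * y ^ (P / (P - 1)) := by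
    rw [mul_rpow (rpow_nonneg (inv_nonneg.2 hc.le) _) hy, ← rpow_mul (inv_nonneg.2 hc.le)]
    congr 2
    field_simp
  rw [hprod, hfirst, hsecond] at hyoung
  refine hyoung.trans (add_le_add (div_le_self (by positivity) hP.le) (div_le_self ?_ hq))
  positivity

lemma mul_le_sq_add_sq_div {x y c : ℝ} (hc : 0 < c) : x * y ≤ c / 4 * x ^ 2 + c⁻¹ * y ^ 2 := by
  have key : 0 ≤ (c * x / 2 - y) ^ 2 / c := by positivity
  have h : (c * x / 2 - y) ^ 2 / c = c / 4 * x ^ 2 + c⁻¹ * y ^ 2 - x * y := by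
    field_simp; ring
  linarith

lemma inv_four_mul_rpow_le_rpow {P v w : ℝ} (hP : 1 ≤ P) (hP2 : P ≤ 2) (hw : 0 < w)
    (hwv : w ≤ 4 * v) : 4⁻¹ * v ^ (P - 2) ≤ w ^ (P - 2) := by
  have hv : 0 < v := by linarith
  have h4 : (4 : ℝ)⁻¹ ≤ 4 ^ (P - 2) := by
    rw [← rpow_neg_one]; exact rpow_le_rpow_of_exponent_le (by norm_num) (by linarith)
  calc 4⁻¹ * v ^ (P - 2) ≤ 4 ^ (P - 2) * v ^ (P - 2) := by gcongr
    _ = (4 * v) ^ (P - 2) := (mul_rpow (by norm_num) (by linarith)).symm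
    _ ≤ w ^ (P - 2) := rpow_le_rpow_of_nonpos hw hwv (by linarith)

/-- Absorption of `X ρ` into `l (a + r)^(P-2) ρ²`: by Young's inequality with exponent `2`, unless
`P < 2` and `ρ ≥ 2a`, where the weight behaves like `ρ^(P-2)` and the exponent is `P`. -/
lemma mul_le_of_young_absorb {P a r ρ X Y l : ℝ} (hP : 1 < P) (ha : 0 < a) (hr : 0 ≤ r)
    (hra : r ≤ a + ρ) (hX : 0 ≤ X) (hl : 0 < l)
    (hsq : X ^ 2 * a ^ (2 - P) ≤ Y) (hpow : P < 2 → X ^ (P / (P - 1)) ≤ Y) :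
    X * ρ ≤ l * (a + r) ^ (P - 2) * ρ ^ 2 + (l⁻¹ + (4 / l) ^ (P - 1)⁻¹) * Y := by
  have hY : 0 ≤ Y := (by positivity : (0 : ℝ) ≤ X ^ 2 * a ^ (2 - P)).trans hsq
  have hYl : 0 ≤ l⁻¹ * Y := by positivity
  have hYP : 0 ≤ (4 / l) ^ (P - 1)⁻¹ * Y := by positivity
  rw [add_mul]
  by_cases hfar : P < 2 ∧ 2 * a ≤ ρ
  · obtain ⟨hP2, haρ⟩ := hfar
    have hρ : 0 < ρ := by linarith
    have hW : l / 4 * ρ ^ P ≤ l * (a + r) ^ (P - 2) * ρ ^ 2 := by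
      have hρP : ρ ^ P = ρ ^ (P - 2) * ρ ^ 2 := by
        rw [← rpow_natCast, ← rpow_add hρ]; norm_num
      calc l / 4 * ρ ^ P = l * (4⁻¹ * ρ ^ (P - 2)) * ρ ^ 2 := by rw [hρP]; ring
        _ ≤ l * (a + r) ^ (P - 2) * ρ ^ 2 := by
            gcongr
            exact inv_four_mul_rpow_le_rpow hP.le hP2.le (by linarith) (by linarith)
    calc X * ρ = ρ * X := mul_comm _ _
      _ ≤ l / 4 * ρ ^ P + (l / 4)⁻¹ ^ (P - 1)⁻¹ * X ^ (P / (P - 1)) :=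
          mul_le_young_weighted hρ.le hX hP (by positivity)
      _ ≤ l * (a + r) ^ (P - 2) * ρ ^ 2 + (4 / l) ^ (P - 1)⁻¹ * Y := by
          rw [inv_div]
          gcongr
          exact hpow hP2
      _ ≤ _ := by linarith
  · have hW : l / 4 * a ^ (P - 2) ≤ l * (a + r) ^ (P - 2) := by
      rw [div_eq_mul_inv, mul_assoc]
      gcongr
      rcases lt_or_ge P 2 with hP2 | hP2
      · have hρa : ρ < 2 * a := not_le.1 fun h => hfar ⟨hP2, h⟩
        exact inv_four_mul_rpow_le_rpow hP.le hP2.le (by linarith) (by linarith)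
      · have : 0 ≤ a ^ (P - 2) := by positivity
        linarith [rpow_le_rpow ha.le (by linarith : a ≤ a + r) (by linarith : 0 ≤ P - 2)]
    have hinv : a ^ (2 - P) = (a ^ (P - 2))⁻¹ := by
      rw [← rpow_neg ha.le, neg_sub]
    calc X * ρ = ρ * X := mul_comm _ _
      _ ≤ (l * a ^ (P - 2)) / 4 * ρ ^ 2 + (l * a ^ (P - 2))⁻¹ * X ^ 2 :=
          mul_le_sq_add_sq_div (by positivity)
      _ = l / 4 * a ^ (P - 2) * ρ ^ 2 + l⁻¹ * (X ^ 2 * a ^ (2 - P)) := by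
          rw [hinv, mul_inv]; ring
      _ ≤ l * (a + r) ^ (P - 2) * ρ ^ 2 + l⁻¹ * Y := by gcongr
      _ ≤ _ := by linarith

lemma rpow_mul_sub_rpow_mul_ge {κ r R γ : ℝ} (hκ : 0 ≤ κ) (hr : 0 ≤ r) (hrR : r ≤ R)
    (hγ : -1 ≤ γ) :
    min 1 (1 + γ) * (κ + R) ^ γ * (R - r) ≤ (κ + R) ^ γ * R - (κ + r) ^ γ * r := by
  have hR : 0 ≤ (κ + R) ^ γ := rpow_nonneg (by linarith) γ
  rcases le_total 0 γ with hγ0 | hγ0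
  · have hmono : (κ + r) ^ γ ≤ (κ + R) ^ γ := rpow_le_rpow (by linarith) (by linarith) hγ0
    rw [min_eq_left (by linarith)]
    nlinarith
  rw [min_eq_right (by linarith)]
  rcases (add_nonneg hκ hr).eq_or_lt with hκr | hκr
  · have hr0 : r = 0 := by linarith
    subst hr0
    simp only [mul_zero, sub_zero]
    nlinarith [mul_nonneg hR hrR]
  -- Bernoulli's inequality for `x = (κ + R) / (κ + r) ≥ 1` and the exponent `-γ ∈ [0, 1]`.
  set x := (κ + R) / (κ + r)
  have hsplit : (κ + r) ^ γ = (κ + R) ^ γ * x ^ (-γ) := by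
    have : (κ + R) ^ γ ≠ 0 := (rpow_pos_of_pos (by linarith) γ).ne'
    rw [div_rpow (by linarith) hκr.le, rpow_neg (by linarith), rpow_neg hκr.le]
    field_simp
  have hbernoulli : x ^ (-γ) ≤ 1 + -γ * (x - 1) := by
    have hx : 1 ≤ x := (one_le_div hκr).2 (by linarith)
    simpa using rpow_one_add_le_one_add_mul_self (s := x - 1) (by linarith)
      (neg_nonneg.2 hγ0) (by linarith)
  have hrx : r * x ≤ R := by
    rw [mul_div_assoc', div_le_iff₀ hκr]; nlinarith
  have : (κ + r) ^ γ * r ≤ (κ + R) ^ γ * (r - γ * (R - r)) := by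
    rw [hsplit, mul_assoc]
    gcongr
    nlinarith
  nlinarith

lemma rpow_le_rpow_of_quarter_le {w x : ℝ} (γ : ℝ) (hw : 0 < w) (hxw : w / 4 ≤ x) (hx : x ≤ w) :
    4 ^ (-|γ|) * w ^ γ ≤ x ^ γ := by
  rcases le_total 0 γ with hγ | hγ
  · rw [abs_of_nonneg hγ, rpow_neg (by norm_num), ← div_eq_inv_mul,
      ← div_rpow hw.le (by norm_num)]
    exact rpow_le_rpow (by positivity) hxw hγ
  · calc 4 ^ (-|γ|) * w ^ γ ≤ 1 * w ^ γ := by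
          gcongr
          exact rpow_le_one_of_one_le_of_nonpos (by norm_num) (by simp)
      _ ≤ x ^ γ := by
          rw [one_mul]; exact rpow_le_rpow_of_nonpos (by linarith) hx hγ

variable {E : Type*} [NormedAddCommGroup E] [InnerProductSpace ℝ E]

lemma norm_smul_sub_smul_sq {c d : ℝ} (hc : 0 ≤ c) (hd : 0 ≤ d) (ξ η : E) :
    ‖c • ξ - d • η‖ ^ 2 = (c * ‖ξ‖ - d * ‖η‖) ^ 2 + 2 * (c * d) * (‖ξ‖ * ‖η‖ - ⟪ξ, η⟫) := by
  rw [norm_sub_sq_real, norm_smul, norm_smul, real_inner_smul_left, real_inner_smul_right,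
    norm_of_nonneg hc, norm_of_nonneg hd]
  ring

lemma mul_norm_sub_le_norm_rpow_smul_sub_of_norm_le {κ γ : ℝ} (hκ : 0 ≤ κ) (hγ : -1 ≤ γ)
    {ξ η : E} (hηξ : ‖η‖ ≤ ‖ξ‖) :
    min 1 (1 + γ) * 4 ^ (-|γ|) * (κ + ‖ξ‖ + ‖η‖) ^ γ * ‖ξ - η‖ ≤
      3 * ‖(κ + ‖ξ‖) ^ γ • ξ - (κ + ‖η‖) ^ γ • η‖ := by
  set R := ‖ξ‖
  set r := ‖η‖
  have hr : 0 ≤ r := norm_nonneg η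
  rcases (show 0 ≤ κ + R + r by linarith).eq_or_lt with hw | hw
  · rw [norm_eq_zero.1 (show R = 0 by linarith), norm_eq_zero.1 (show r = 0 by linarith)]
    simp
  set m := min 1 (1 + γ)
  have hm0 : 0 ≤ m := le_min zero_le_one (by linarith)
  have hm1 : m ≤ 1 := min_le_left _ _
  set L := 4 ^ (-|γ|) * (κ + R + r) ^ γ
  have hL0 : 0 ≤ L := by positivity
  set cR := (κ + R) ^ γ
  set cr := (κ + r) ^ γ
  have hcR0 : 0 ≤ cR := rpow_nonneg (by linarith) γ
  have hcr0 : 0 ≤ cr := rpow_nonneg (by linarith) γ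
  have hLR : L ≤ cR := rpow_le_rpow_of_quarter_le γ hw (by linarith) (by linarith)
  have hradial : m * L * (R - r) ≤ cR * R - cr * r :=
    le_trans (by gcongr) (rpow_mul_sub_rpow_mul_ge hκ hr hηξ hγ)
  have hmLR : 0 ≤ m * L * (R - r) := mul_nonneg (mul_nonneg hm0 hL0) (by linarith)
  rw [show m * 4 ^ (-|γ|) * (κ + R + r) ^ γ = m * L by ring]
  -- If `2r ≤ R` then `‖ξ - η‖ ≤ R + r ≤ 3 (R - r)` and the radial part suffices; otherwise both
  -- weights `cR` and `cr` are comparable to `(κ + R + r) ^ γ`.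
  rcases le_total (2 * r) R with hsep | hclose
  · have hnorm : cR * R - cr * r ≤ ‖cR • ξ - cr • η‖ := by
      simpa only [norm_smul, norm_of_nonneg hcR0, norm_of_nonneg hcr0] using
        norm_sub_norm_le (cR • ξ) (cr • η)
    have hρ : ‖ξ - η‖ ≤ 3 * (R - r) := by linarith [norm_sub_le ξ η]
    calc m * L * ‖ξ - η‖ ≤ m * L * (3 * (R - r)) := by gcongr
      _ = 3 * (m * L * (R - r)) := by ring
      _ ≤ 3 * ‖cR • ξ - cr • η‖ := by gcongr; linarith
  · have hLr : L ≤ cr := rpow_le_rpow_of_quarter_le γ hw (by linarith) (by linarith)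
    have hK : 0 ≤ R * r - ⟪ξ, η⟫ := sub_nonneg.2 (real_inner_le_norm ξ η)
    have hsq : (m * L * ‖ξ - η‖) ^ 2 ≤ ‖cR • ξ - cr • η‖ ^ 2 := by
      rw [norm_smul_sub_smul_sq hcR0 hcr0, mul_pow, norm_sub_sq_real]
      have h1 : (m * L * (R - r)) ^ 2 ≤ (cR * R - cr * r) ^ 2 := pow_le_pow_left₀ hmLR hradial 2
      have h2 : (m * L) ^ 2 ≤ cR * cr := by
        calc (m * L) ^ 2 ≤ 1 * (L * L) := by rw [mul_pow, sq L]; gcongr; nlinarith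
          _ ≤ cR * cr := by rw [one_mul]; exact mul_le_mul hLR hLr hL0 hcR0
      nlinarith [mul_le_mul_of_nonneg_right h2 hK]
    have := (pow_le_pow_iff_left₀ (by positivity) (norm_nonneg _) two_ne_zero).1 hsq
    linarith [norm_nonneg (cR • ξ - cr • η)]

lemma mul_norm_sub_le_norm_rpow_smul_sub {κ γ : ℝ} (hκ : 0 ≤ κ) (hγ : -1 ≤ γ) (ξ η : E) :
    min 1 (1 + γ) * 4 ^ (-|γ|) * (κ + ‖ξ‖ + ‖η‖) ^ γ * ‖ξ - η‖ ≤
      3 * ‖(κ + ‖ξ‖) ^ γ • ξ - (κ + ‖η‖) ^ γ • η‖ := by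
  rcases le_total ‖η‖ ‖ξ‖ with h | h
  · exact mul_norm_sub_le_norm_rpow_smul_sub_of_norm_le hκ hγ h
  · simpa only [norm_sub_rev η ξ, norm_sub_rev ((κ + ‖η‖) ^ γ • η), add_right_comm κ ‖η‖] using
      mul_norm_sub_le_norm_rpow_smul_sub_of_norm_le hκ hγ h

lemma sq_mul_norm_sub_le_sq_norm_rpow_smul_sub {κ pm pp P : ℝ} (hκ : 0 ≤ κ) (hpm : 1 ≤ pm)
    (hPm : pm ≤ P) (hPp : P ≤ pp) (ξ η : E) :
    (min 1 (pm / 2) * 4 ^ (-(pp / 2)) / 3) ^ 2 * (κ + ‖ξ‖ + ‖η‖) ^ (P - 2) * ‖ξ - η‖ ^ 2 ≤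
      ‖(κ + ‖ξ‖) ^ ((P - 2) / 2) • ξ - (κ + ‖η‖) ^ ((P - 2) / 2) • η‖ ^ 2 := by
  have hw : 0 ≤ κ + ‖ξ‖ + ‖η‖ := by positivity
  have hconst : min 1 (pm / 2) * 4 ^ (-(pp / 2)) ≤ min 1 (1 + (P - 2) / 2) * 4 ^ (-|(P - 2) / 2|) :=
    mul_le_mul (min_le_min_left _ (by linarith))
      (rpow_le_rpow_of_exponent_le (by norm_num) (neg_le_neg (abs_le.2 ⟨by linarith, by linarith⟩)))
      (by positivity) (le_min zero_le_one (by linarith))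
  have hV := mul_norm_sub_le_norm_rpow_smul_sub hκ (γ := (P - 2) / 2) (by linarith) ξ η
  have hsq : (κ + ‖ξ‖ + ‖η‖) ^ (P - 2) = ((κ + ‖ξ‖ + ‖η‖) ^ ((P - 2) / 2)) ^ 2 := by
    rw [← rpow_two, ← rpow_mul hw]; ring_nf
  rw [hsq, ← mul_pow, ← mul_pow]
  refine pow_le_pow_left₀ (by positivity) ?_ 2
  calc min 1 (pm / 2) * 4 ^ (-(pp / 2)) / 3 * (κ + ‖ξ‖ + ‖η‖) ^ ((P - 2) / 2) * ‖ξ - η‖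
      ≤ min 1 (1 + (P - 2) / 2) * 4 ^ (-|(P - 2) / 2|) / 3 * (κ + ‖ξ‖ + ‖η‖) ^ ((P - 2) / 2) *
        ‖ξ - η‖ := by gcongr
    _ ≤ _ := by linarith

lemma inner_rpow_smul_sub_le {a P Q ε : ℝ} (ha : 0 ≤ a) (hε : 0 < ε) (hPQ : |Q - P| ≤ ε)
    {ξ : E} (hξ : ‖ξ‖ ≤ a) (η : E) :
    ⟪a ^ (P - 2) • ξ - a ^ (Q - 2) • ξ, ξ - η⟫ ≤
      |Q - P| / ε * a ^ (P - 1) * max a a⁻¹ ^ ε * ‖ξ - η‖ := by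
  rcases ha.eq_or_lt with rfl | ha
  · rw [norm_le_zero_iff.1 hξ]
    simp only [smul_zero, sub_self, inner_zero_left]
    positivity
  have hfactor : a ^ (P - 2) - a ^ (Q - 2) = -(a ^ (P - 2) * (a ^ (Q - P) - 1)) := by
    rw [mul_sub, ← rpow_add ha]; ring_nf
  have hpow : a ^ (P - 2) * a = a ^ (P - 1) := by
    rw [← rpow_add_one ha.ne']; ring_nf
  rw [← sub_smul, real_inner_smul_left, hfactor, neg_mul]
  calc -(a ^ (P - 2) * (a ^ (Q - P) - 1) * ⟪ξ, ξ - η⟫)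
      ≤ |a ^ (P - 2) * (a ^ (Q - P) - 1)| * |⟪ξ, ξ - η⟫| := by
        rw [← abs_mul]; exact neg_le_abs _
    _ ≤ a ^ (P - 2) * |a ^ (Q - P) - 1| * (‖ξ‖ * ‖ξ - η‖) := by
        rw [abs_mul, abs_of_pos (rpow_pos_of_pos ha _)]
        gcongr
        exact abs_real_inner_le_norm _ _
    _ ≤ a ^ (P - 2) * (|Q - P| / ε * max a a⁻¹ ^ ε) * (a * ‖ξ - η‖) := by
        gcongr
        exact abs_rpow_sub_one_le ha hε hPQ
    _ = |Q - P| / ε * a ^ (P - 1) * max a a⁻¹ ^ ε * ‖ξ - η‖ := by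
        rw [← hpow]; ring

lemma inner_rpow_smul_sub_le_of_absorb {κ P Q ε Λ l : ℝ} (hκ : 0 ≤ κ) (hP : 1 < P) (hε : 0 < ε)
    (hPQ : |Q - P| ≤ ε) (h2ε : 2 * ε ≤ Λ) (hεP : P < 2 → ε * (P / (P - 1)) ≤ Λ) (hl : 0 < l)
    (ξ η : E) :
    ⟪(κ + ‖ξ‖) ^ (P - 2) • ξ - (κ + ‖ξ‖) ^ (Q - 2) • ξ, ξ - η⟫ ≤
      l * (κ + ‖ξ‖ + ‖η‖) ^ (P - 2) * ‖ξ - η‖ ^ 2 + (l⁻¹ + (4 / l) ^ (P - 1)⁻¹) *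
        ((|Q - P| / ε) ^ 2 * ((κ + ‖ξ‖) ^ P * max (κ + ‖ξ‖) (κ + ‖ξ‖)⁻¹ ^ Λ)) := by
  set a := κ + ‖ξ‖
  have ht : 0 ≤ |Q - P| / ε := by positivity
  rcases (show 0 ≤ a by positivity).eq_or_lt with ha | ha
  · rw [norm_eq_zero.1 (show ‖ξ‖ = 0 by linarith [norm_nonneg ξ])]
    simp only [smul_zero, sub_self, inner_zero_left]
    positivity
  have hηξ : ‖η‖ ≤ a + ‖ξ - η‖ := by
    have := norm_sub_norm_le η ξ
    rw [norm_sub_rev η ξ] at this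
    linarith
  calc _ ≤ |Q - P| / ε * a ^ (P - 1) * max a a⁻¹ ^ ε * ‖ξ - η‖ :=
        inner_rpow_smul_sub_le ha.le hε hPQ (by linarith) η
    _ ≤ _ := mul_le_of_young_absorb hP ha (norm_nonneg η) hηξ (by positivity) hl
        (sq_mul_rpow_le ht ha h2ε)
        (fun hP2 => rpow_conjExponent_le ht ((div_le_one hε).2 hPQ) ha hP hP2.le (hεP hP2))

lemma exists_exponent_margins {pm s : ℝ} (hpm : 1 < pm) (hs : 1 < s) :
    ∃ ε Λ : ℝ, 0 < ε ∧ 2 * ε ≤ Λ ∧ 0 ≤ Λ ∧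
      ∀ P, pm ≤ P → ε * (P / (P - 1)) ≤ Λ ∧ Λ ≤ P ∧ P + Λ ≤ P * s := by
  set Λ := pm * min 1 (s - 1)
  set q := pm / (pm - 1)
  have hΛ : 0 < Λ := mul_pos (by linarith) (lt_min one_pos (by linarith))
  have hq : 1 ≤ q := (one_le_div (by linarith)).2 (by linarith)
  refine ⟨Λ / (2 * q), Λ, by positivity, ?_, hΛ.le, fun P hP => ⟨?_, ?_, ?_⟩⟩
  · rw [mul_div_assoc', div_le_iff₀ (by positivity)]; nlinarith
  · have hPq : P / (P - 1) ≤ q := by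
      rw [div_le_div_iff₀ (by linarith) (by linarith)]; nlinarith
    calc Λ / (2 * q) * (P / (P - 1)) ≤ Λ / (2 * q) * q := by gcongr
      _ ≤ Λ := by field_simp; linarith
  · nlinarith [min_le_left 1 (s - 1)]
  · nlinarith [min_le_right 1 (s - 1)]

lemma exists_mul_rpow_le {K α ε : ℝ} (hK : 0 < K) (hα : 0 < α) (hε : 0 < ε) :
    ∃ Δt₀ : ℝ, 0 < Δt₀ ∧ Δt₀ < 1 ∧ ∀ Δt, 0 < Δt → Δt ≤ Δt₀ → K * Δt ^ α ≤ ε := by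
  refine ⟨min (1 / 2) ((ε / K) ^ α⁻¹), by positivity, (min_le_left _ _).trans_lt (by norm_num),
    fun Δt hΔt hΔtle => ?_⟩
  calc K * Δt ^ α ≤ K * ((ε / K) ^ α⁻¹) ^ α := by
        gcongr; exact hΔtle.trans (min_le_right _ _)
    _ = ε := by
        rw [← rpow_mul (by positivity), inv_mul_cancel₀ hα.ne', rpow_one]; field_simp

lemma rpow_inv_sub_one_le_max_one_rpow {x pm P : ℝ} (hx : 0 ≤ x) (hpm : 1 < pm) (hP : pm ≤ P) :
    x ^ (P - 1)⁻¹ ≤ max 1 x ^ (pm - 1)⁻¹ :=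
  calc x ^ (P - 1)⁻¹ ≤ max 1 x ^ (P - 1)⁻¹ :=
        rpow_le_rpow hx (le_max_right _ _) (inv_nonneg.2 (by linarith))
    _ ≤ max 1 x ^ (pm - 1)⁻¹ :=
        rpow_le_rpow_of_exponent_le (le_max_left _ _) (by gcongr)

lemma div_sq_le_mul_rpow_two_mul {d K ε τ α : ℝ} (hd : 0 ≤ d) (hε : 0 < ε) (hτ : 0 ≤ τ)
    (hdK : d ≤ K * τ ^ α) : (d / ε) ^ 2 ≤ (K / ε) ^ 2 * τ ^ (2 * α) := by
  rw [mul_comm 2 α, rpow_mul hτ, rpow_two, ← mul_pow, div_mul_eq_mul_div]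
  exact pow_le_pow_left₀ (by positivity) (div_le_div_of_nonneg_right hdK hε.le) 2

end VariableExponent

open VariableExponent Real

theorem stmt6 (N n : ℕ) (T : ℝ)
    (Ω : Set (EuclideanSpace ℝ (Fin n)))
    (κ αx αt : ℝ) (hκ : 0 ≤ κ) (hαx : αx ∈ Ioc (0:ℝ) 1) (hαt : αt ∈ Ioc (0:ℝ) 1)
    (p : ℝ × EuclideanSpace ℝ (Fin n) → ℝ) (pminus pplus c₀ : ℝ)
    (hpm : 1 < pminus) (hc₀ : 0 ≤ c₀)
    (hbounds : ∀ z ∈ Icc (0:ℝ) T ×ˢ closure Ω, pminus ≤ p z ∧ p z ≤ pplus)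
    (hHolder : ∀ t ∈ Icc (0:ℝ) T, ∀ s ∈ Icc (0:ℝ) T, ∀ x ∈ closure Ω, ∀ y ∈ closure Ω,
      |p (t, x) - p (s, y)| ≤ c₀ * (|t - s| ^ αt + ‖x - y‖ ^ αx))
    (s δ : ℝ) (hs : 1 < s) (hδ : 0 < δ) :
    ∃ c Δt₀ : ℝ, 0 < c ∧ 0 < Δt₀ ∧ Δt₀ < 1 ∧
      ∀ Δt : ℝ, 0 < Δt → Δt ≤ Δt₀ →
        ∀ σ ∈ Icc (0:ℝ) T, ∀ t ∈ Icc (0:ℝ) T, |t - σ| ≤ Δt →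
          ∀ x ∈ closure Ω, ∀ ξ η : EuclideanSpace ℝ (Fin N × Fin n),
            ⟪(κ + ‖ξ‖) ^ (p (t, x) - 2) • ξ - (κ + ‖ξ‖) ^ (p (σ, x) - 2) • ξ, ξ - η⟫ ≤
              δ * ‖(κ + ‖ξ‖) ^ ((p (t, x) - 2) / 2) • ξ -
                    (κ + ‖η‖) ^ ((p (t, x) - 2) / 2) • η‖ ^ 2 +
                c * Δt ^ (2 * αt) * (1 + ‖ξ‖) ^ (p (t, x) * s) := by
  obtain ⟨ε, Λ, hε, h2ε, hΛ, hmargin⟩ := exists_exponent_margins hpm hs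
  obtain ⟨Δt₀, hΔt₀, hΔt₀1, hstep⟩ := exists_mul_rpow_le (by linarith : 0 < 1 + c₀) hαt.1 hε
  set l := δ * (min 1 (pminus / 2) * 4 ^ (-(pplus / 2)) / 3) ^ 2
  have hl : 0 < l := mul_pos hδ (pow_pos (div_pos (mul_pos (lt_min one_pos (by linarith))
    (by positivity)) three_pos) 2)
  refine ⟨(l⁻¹ + max 1 (4 / l) ^ (pminus - 1)⁻¹) * ((1 + c₀) / ε) ^ 2 * (1 + κ) ^ (pplus * s),
    Δt₀, by positivity, hΔt₀, hΔt₀1, fun Δt hΔt hΔtle σ hσ t ht htσ x hx ξ η => ?_⟩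
  obtain ⟨hPm, hPp⟩ := hbounds (t, x) (mk_mem_prod ht hx)
  obtain ⟨hεP, hΛP, hPΛ⟩ := hmargin _ hPm
  have hPQ : |p (σ, x) - p (t, x)| ≤ (1 + c₀) * Δt ^ αt := by
    have h := hHolder σ hσ t ht x hx x hx
    rw [sub_self, norm_zero, zero_rpow hαx.1.ne', add_zero, abs_sub_comm σ] at h
    calc _ ≤ c₀ * Δt ^ αt := h.trans (by gcongr; exact hαt.1.le)
      _ ≤ (1 + c₀) * Δt ^ αt := by gcongr; linarith
  refine (inner_rpow_smul_sub_le_of_absorb hκ (by linarith) hε (hPQ.trans (hstep Δt hΔt hΔtle))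
    h2ε (fun _ => hεP) hl ξ η).trans (add_le_add ?_ ?_)
  · rw [mul_assoc, mul_assoc, ← mul_assoc (_ ^ 2)]
    gcongr
    exact sq_mul_norm_sub_le_sq_norm_rpow_smul_sub hκ hpm.le hPm hPp ξ η
  · have hpower := rpow_mul_max_inv_rpow_le (a := κ + ‖ξ‖) (b := 1 + ‖ξ‖) (c := 1 + κ)
      (E := pplus * s) (by positivity) (by simp) (by linarith) (by nlinarith [norm_nonneg ξ]) hΛ
      hΛP hPΛ (by gcongr)
    calc _ ≤ (l⁻¹ + max 1 (4 / l) ^ (pminus - 1)⁻¹) * (((1 + c₀) / ε) ^ 2 * Δt ^ (2 * αt) *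
          ((1 + κ) ^ (pplus * s) * (1 + ‖ξ‖) ^ (p (t, x) * s))) := by
          gcongr
          · exact rpow_inv_sub_one_le_max_one_rpow (by positivity) hpm hPm
          · exact div_sq_le_mul_rpow_two_mul (abs_nonneg _) hε hΔt.le hPQ
      _ = _ := by ring
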